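/- arXiv:2306.06714 — 2 statements merged into one kernel-verified Lean document; each statement's English description precedes it below -/
import Mathlib

section
/- For the cycle C_n on n ≥ 3 vertices, L⊠_E(C_n)=L×_E(C_n)=n+1. -/
open SimpleGraph

/-- An `l`-track on `G`: a surjective function whose consecutive values are adjacent. -/
def IsTrack {V : Type*} (G : SimpleGraph V) {l : ℕ} (f : Fin l → V) : Prop :=
  Function.Surjective f ∧
    ∀ i : ℕ, ∀ hi : i + 1 < l, G.Adj (f ⟨i, Nat.lt_of_succ_lt hi⟩) (f ⟨i + 1, hi⟩)

/-- A lazy `l`-track on `G`: consecutive values are adjacent or equal. -/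
def IsLazyTrack {V : Type*} (G : SimpleGraph V) {l : ℕ} (f : Fin l → V) : Prop :=
  Function.Surjective f ∧
    ∀ i : ℕ, ∀ hi : i + 1 < l,
      G.Adj (f ⟨i, Nat.lt_of_succ_lt hi⟩) (f ⟨i + 1, hi⟩) ∨
        f ⟨i, Nat.lt_of_succ_lt hi⟩ = f ⟨i + 1, hi⟩

/-- The condition that every edge of `G` is traversed by `f`. -/
def SweepCond {V : Type*} (G : SimpleGraph V) {l : ℕ} (f : Fin l → V) : Prop :=
  ∀ e ∈ G.edgeSet, ∃ i : ℕ, ∃ hi : i + 1 < l,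
    e = s(f ⟨i, Nat.lt_of_succ_lt hi⟩, f ⟨i + 1, hi⟩)

/-- An `l`-sweep on `G`: an `l`-track traversing every edge. -/
def IsSweep {V : Type*} (G : SimpleGraph V) {l : ℕ} (f : Fin l → V) : Prop :=
  IsTrack G f ∧ SweepCond G f

/-- A lazy `l`-sweep on `G`: a lazy `l`-track traversing every edge. -/
def IsLazySweep {V : Type*} (G : SimpleGraph V) {l : ℕ} (f : Fin l → V) : Prop :=
  IsLazyTrack G f ∧ SweepCond G f

/-- `f` and `g` are opposite: at each step exactly `f` moves iff `g` stays. -/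
def IsOpposite {V : Type*} (G : SimpleGraph V) {l : ℕ} (f g : Fin l → V) : Prop :=
  ∀ i : ℕ, ∀ hi : i + 1 < l,
    (G.Adj (f ⟨i, Nat.lt_of_succ_lt hi⟩) (f ⟨i + 1, hi⟩) ↔
      g ⟨i, Nat.lt_of_succ_lt hi⟩ = g ⟨i + 1, hi⟩)

/-- The distance `m_G(f,g)`: minimal distance between simultaneous positions. -/
noncomputable def mDist {V : Type*} (G : SimpleGraph V) {l : ℕ} (f g : Fin l → V) : ℕ :=
  sInf {d | ∃ i : Fin l, G.dist (f i) (g i) = d}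

/-- Strong vertex span `σ⊠_V(G)`. -/
noncomputable def strongVertexSpan {V : Type*} (G : SimpleGraph V) : ℕ :=
  sSup {d | ∃ (l : ℕ) (f g : Fin l → V), IsLazyTrack G f ∧ IsLazyTrack G g ∧ mDist G f g = d}

/-- Direct vertex span `σ×_V(G)`. -/
noncomputable def directVertexSpan {V : Type*} (G : SimpleGraph V) : ℕ :=
  sSup {d | ∃ (l : ℕ) (f g : Fin l → V), IsTrack G f ∧ IsTrack G g ∧ mDist G f g = d}

/-- Cartesian vertex span `σ□_V(G)`. -/
noncomputable def cartesianVertexSpan {V : Type*} (G : SimpleGraph V) : ℕ :=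
  sSup {d | ∃ (l : ℕ) (f g : Fin l → V),
    IsLazyTrack G f ∧ IsLazyTrack G g ∧ IsOpposite G f g ∧ mDist G f g = d}

/-- Strong edge span `σ⊠_E(G)`. -/
noncomputable def strongEdgeSpan {V : Type*} (G : SimpleGraph V) : ℕ :=
  sSup {d | ∃ (l : ℕ) (f g : Fin l → V), IsLazySweep G f ∧ IsLazySweep G g ∧ mDist G f g = d}

/-- Direct edge span `σ×_E(G)`. -/
noncomputable def directEdgeSpan {V : Type*} (G : SimpleGraph V) : ℕ :=
  sSup {d | ∃ (l : ℕ) (f g : Fin l → V), IsSweep G f ∧ IsSweep G g ∧ mDist G f g = d}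

/-- Cartesian edge span `σ□_E(G)`. -/
noncomputable def cartesianEdgeSpan {V : Type*} (G : SimpleGraph V) : ℕ :=
  sSup {d | ∃ (l : ℕ) (f g : Fin l → V),
    IsLazySweep G f ∧ IsLazySweep G g ∧ IsOpposite G f g ∧ mDist G f g = d}

/-- `L⊠_V(G)`: minimal length of lazy tracks realizing the strong vertex span. -/
noncomputable def strongVertexL {V : Type*} (G : SimpleGraph V) : ℕ :=
  sInf {l | ∃ f g : Fin l → V,
    IsLazyTrack G f ∧ IsLazyTrack G g ∧ mDist G f g = strongVertexSpan G}

/-- `L×_V(G)`. -/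
noncomputable def directVertexL {V : Type*} (G : SimpleGraph V) : ℕ :=
  sInf {l | ∃ f g : Fin l → V,
    IsTrack G f ∧ IsTrack G g ∧ mDist G f g = directVertexSpan G}

/-- `L□_V(G)`. -/
noncomputable def cartesianVertexL {V : Type*} (G : SimpleGraph V) : ℕ :=
  sInf {l | ∃ f g : Fin l → V,
    IsLazyTrack G f ∧ IsLazyTrack G g ∧ IsOpposite G f g ∧ mDist G f g = cartesianVertexSpan G}

/-- `L⊠_E(G)`. -/
noncomputable def strongEdgeL {V : Type*} (G : SimpleGraph V) : ℕ :=
  sInf {l | ∃ f g : Fin l → V,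
    IsLazySweep G f ∧ IsLazySweep G g ∧ mDist G f g = strongEdgeSpan G}

/-- `L×_E(G)`. -/
noncomputable def directEdgeL {V : Type*} (G : SimpleGraph V) : ℕ :=
  sInf {l | ∃ f g : Fin l → V,
    IsSweep G f ∧ IsSweep G g ∧ mDist G f g = directEdgeSpan G}

/-- `L□_E(G)`. -/
noncomputable def cartesianEdgeL {V : Type*} (G : SimpleGraph V) : ℕ :=
  sInf {l | ∃ f g : Fin l → V,
    IsLazySweep G f ∧ IsLazySweep G g ∧ IsOpposite G f g ∧ mDist G f g = cartesianEdgeSpan G}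

/-!
Every distance in `C_n` is at most `⌊n/2⌋`, and the rotations `i ↦ i` and `i ↦ i + ⌊n/2⌋`,
run for `n + 1` steps, are sweeps that stay at distance exactly `⌊n/2⌋` from each other. So both
edge spans equal `⌊n/2⌋` and are attained at length `n + 1`. No shorter (lazy) sweep exists: the `n`
edges of `C_n` must be traversed at `n` distinct steps.
-/

open Finset

variable {V : Type*} {G : SimpleGraph V}

section Span

noncomputable def pairSpan (G : SimpleGraph V) (P : ∀ {l : ℕ}, (Fin l → V) → Prop) : ℕ :=
  sSup {d | ∃ (l : ℕ) (f g : Fin l → V), P f ∧ P g ∧ mDist G f g = d}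

noncomputable def pairSpanLength (G : SimpleGraph V) (P : ∀ {l : ℕ}, (Fin l → V) → Prop) : ℕ :=
  sInf {l | ∃ f g : Fin l → V, P f ∧ P g ∧ mDist G f g = pairSpan G P}

theorem strongEdgeL_eq_pairSpanLength : strongEdgeL G = pairSpanLength G (IsLazySweep G) := rfl

theorem directEdgeL_eq_pairSpanLength : directEdgeL G = pairSpanLength G (IsSweep G) := rfl

theorem mDist_le_dist {l : ℕ} (f g : Fin l → V) (i : Fin l) :
    mDist G f g ≤ G.dist (f i) (g i) :=
  Nat.sInf_le ⟨i, rfl⟩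

theorem mDist_eq_of_forall_dist_eq {l d : ℕ} [NeZero l] {f g : Fin l → V}
    (h : ∀ i, G.dist (f i) (g i) = d) : mDist G f g = d :=
  le_antisymm ((mDist_le_dist f g 0).trans_eq (h 0))
    (le_csInf ⟨_, 0, rfl⟩ (by rintro _ ⟨i, rfl⟩; exact (h i).ge))

theorem pairSpanLength_eq {P : ∀ {l : ℕ}, (Fin l → V) → Prop} {D L : ℕ}
    (hD : ∀ {l : ℕ} {f g : Fin l → V}, P f → mDist G f g ≤ D)
    (hL : ∀ {l : ℕ} {f : Fin l → V}, P f → L ≤ l)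
    {f g : Fin L → V} (hf : P f) (hg : P g) (hfg : mDist G f g = D) :
    pairSpanLength G P = L := by
  have hspan : pairSpan G P = D :=
    IsGreatest.csSup_eq ⟨⟨L, f, g, hf, hg, hfg⟩, by rintro _ ⟨l, f, g, hf, -, rfl⟩; exact hD hf⟩
  refine IsLeast.csInf_eq ⟨⟨f, g, hf, hg, hfg.trans hspan.symm⟩, ?_⟩
  rintro l ⟨f, -, hf, -⟩
  exact hL hf

end Span

theorem IsSweep.isLazySweep {l : ℕ} {f : Fin l → V} (h : IsSweep G f) : IsLazySweep G f :=
  ⟨⟨h.1.1, fun i hi => Or.inl (h.1.2 i hi)⟩, h.2⟩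

/-- Distinct edges are traversed at distinct steps. -/
theorem SweepCond.card_edgeFinset_le [Fintype G.edgeSet] {l : ℕ} {f : Fin l → V}
    (hf : SweepCond G f) : #G.edgeFinset ≤ l - 1 := by
  choose idx hidx hedge using hf
  have hinj : Function.Injective fun e : G.edgeSet =>
      (⟨idx e e.2, by have := hidx e e.2; omega⟩ : Fin (l - 1)) := by
    rintro ⟨e, he⟩ ⟨e', he'⟩ h
    simp only [Fin.mk.injEq] at h
    refine Subtype.ext ((hedge e he).trans (Eq.trans ?_ (hedge e' he').symm))
    simp only [h]
  simpa [edgeFinset_card] using Fintype.card_le_of_injective _ hinj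

theorem SimpleGraph.Walk.le_add_length {φ : V → ℕ} (hφ : ∀ ⦃u v⦄, G.Adj u v → φ u ≤ φ v + 1)
    {u v : V} (p : G.Walk u v) : φ u ≤ φ v + p.length := by
  induction p with
  | nil => simp
  | cons h p ih => rw [Walk.length_cons]; have := hφ h; omega

theorem SimpleGraph.Reachable.le_add_dist {φ : V → ℕ}
    (hφ : ∀ ⦃u v⦄, G.Adj u v → φ u ≤ φ v + 1) {u v : V} (h : G.Reachable u v) :
    φ u ≤ φ v + G.dist u v := by
  obtain ⟨p, hp⟩ := h.exists_walk_length_eq_dist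
  exact hp ▸ p.le_add_length hφ

section Cycle

open Fin.NatCast Fin.CommRing

variable {n : ℕ}

def cycleNorm (a : Fin n) : ℕ := min a.val (-a).val

@[simp]
theorem cycleNorm_neg (a : Fin n) : cycleNorm (-a) = cycleNorm a := by
  simp [cycleNorm, min_comm]

theorem cycleNorm_eq [NeZero n] (a : Fin n) : cycleNorm a = min a.val (n - a.val) := by
  rw [cycleNorm, Fin.val_neg]
  split_ifs with h <;> simp [h]

theorem cycleNorm_le_half [NeZero n] (a : Fin n) : cycleNorm a ≤ n / 2 := by
  rw [cycleNorm_eq]; omega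

theorem cycleNorm_natCast_half [NeZero n] : cycleNorm ((n / 2 : ℕ) : Fin n) = n / 2 := by
  rw [cycleNorm_eq, Fin.val_natCast, Nat.mod_eq_of_lt (by have := NeZero.pos n; omega)]
  omega

theorem cycleNorm_add_one_le (a : Fin (n + 1)) : cycleNorm (a + 1) ≤ cycleNorm a + 1 := by
  rw [cycleNorm_eq, cycleNorm_eq, Fin.val_add_one]
  split_ifs with h
  · simp
  · have := Fin.val_lt_last h; omega

theorem cycleNorm_sub_one_le (a : Fin (n + 1)) : cycleNorm (a - 1) ≤ cycleNorm a + 1 := by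
  rw [← cycleNorm_neg (a - 1), neg_sub, ← neg_add_eq_sub, ← cycleNorm_neg a]
  exact cycleNorm_add_one_le (-a)

theorem cycleNorm_sub_le_dist (u v : Fin (n + 2)) :
    cycleNorm (u - v) ≤ (cycleGraph (n + 2)).dist u v := by
  have hφ : ∀ ⦃x y⦄, (cycleGraph (n + 2)).Adj x y →
      cycleNorm (x - v) ≤ cycleNorm (y - v) + 1 := by
    intro x y h
    rcases cycleGraph_adj.mp h with h | h
    · rw [show x - v = y - v + 1 by rw [← h]; abel]
      exact cycleNorm_add_one_le _
    · rw [show x - v = y - v - 1 by rw [← h]; abel]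
      exact cycleNorm_sub_one_le _
  simpa [cycleNorm] using (cycleGraph_connected.preconnected u v).le_add_dist hφ

theorem cycleGraph_dist_add_natCast_le (u : Fin (n + 2)) (k : ℕ) :
    (cycleGraph (n + 2)).dist u (u + k) ≤ k := by
  induction k with
  | zero => simp
  | succ k ih =>
    have hadj : (cycleGraph (n + 2)).Adj (u + k) (u + (k + 1 : ℕ)) :=
      cycleGraph_adj.mpr (Or.inr (by push_cast; ring))
    calc _ ≤ (cycleGraph (n + 2)).dist u (u + k)
            + (cycleGraph (n + 2)).dist (u + k) (u + (k + 1 : ℕ)) :=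
          cycleGraph_connected.dist_triangle
      _ ≤ k + 1 := by rw [dist_eq_one_iff_adj.mpr hadj]; omega

theorem cycleGraph_dist_le_val_sub (u v : Fin (n + 2)) :
    (cycleGraph (n + 2)).dist u v ≤ (v - u).val := by
  simpa using cycleGraph_dist_add_natCast_le u (v - u).val

theorem cycleGraph_dist (u v : Fin (n + 2)) :
    (cycleGraph (n + 2)).dist u v = cycleNorm (u - v) := by
  refine le_antisymm (le_min ?_ ?_) (cycleNorm_sub_le_dist u v)
  · rw [dist_comm]; exact cycleGraph_dist_le_val_sub v u
  · rw [neg_sub]; exact cycleGraph_dist_le_val_sub u v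

theorem cycleGraph_dist_le_half (u v : Fin (n + 2)) :
    (cycleGraph (n + 2)).dist u v ≤ (n + 2) / 2 :=
  cycleGraph_dist u v ▸ cycleNorm_le_half _

theorem card_edgeFinset_cycleGraph : #(cycleGraph (n + 3)).edgeFinset = n + 3 := by
  have := sum_degrees_eq_twice_card_edges (cycleGraph (n + 3))
  simp only [cycleGraph_degree_three_le, sum_const, card_univ, Fintype.card_fin,
    smul_eq_mul] at this
  omega

def cycleRotation (n : ℕ) [NeZero n] (t : Fin n) (i : Fin (n + 1)) : Fin n := (i : ℕ) + t

theorem cycleRotation_succ [NeZero n] (t : Fin n) {i : ℕ} (hi : i + 1 < n + 1) :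
    cycleRotation n t ⟨i + 1, hi⟩ = cycleRotation n t ⟨i, Nat.lt_of_succ_lt hi⟩ + 1 := by
  simp only [cycleRotation]; push_cast; ring

theorem cycleRotation_val_sub [NeZero n] (t w : Fin n) :
    cycleRotation n t ⟨(w - t).val, by omega⟩ = w := by
  simp [cycleRotation]

theorem isSweep_cycleRotation (t : Fin (n + 2)) :
    IsSweep (cycleGraph (n + 2)) (cycleRotation (n + 2) t) := by
  have hstep : ∀ w, ∃ i, ∃ hi : i + 1 < n + 2 + 1,
      cycleRotation (n + 2) t ⟨i, Nat.lt_of_succ_lt hi⟩ = w ∧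
        cycleRotation (n + 2) t ⟨i + 1, hi⟩ = w + 1 :=
    fun w => ⟨(w - t).val, by omega, cycleRotation_val_sub t w,
      by rw [cycleRotation_succ, cycleRotation_val_sub]⟩
  refine ⟨⟨fun w => ⟨_, cycleRotation_val_sub t w⟩, fun i hi => ?_⟩, fun e he => ?_⟩
  · rw [cycleRotation_succ]
    exact cycleGraph_adj.mpr (Or.inr (add_sub_cancel_left _ _))
  · induction e with
    | h u v =>
      rcases cycleGraph_adj.mp he with h | h
      · obtain ⟨i, hi, hv, hu⟩ := hstep v
        exact ⟨i, hi, by rw [hv, hu, ← sub_eq_iff_eq_add'.mp h, Sym2.eq_swap]⟩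
      · obtain ⟨i, hi, hu, hv⟩ := hstep u
        exact ⟨i, hi, by rw [hu, hv, ← sub_eq_iff_eq_add'.mp h]⟩

theorem mDist_cycleRotation :
    mDist (cycleGraph (n + 2)) (cycleRotation (n + 2) 0)
      (cycleRotation (n + 2) ((n + 2) / 2 : ℕ)) = (n + 2) / 2 :=
  mDist_eq_of_forall_dist_eq fun i => by
    rw [cycleGraph_dist, cycleRotation, cycleRotation, add_sub_add_left_eq_sub, zero_sub,
      cycleNorm_neg, cycleNorm_natCast_half]

theorem cycleGraph_pairSpanLength {P : ∀ {l : ℕ}, (Fin l → Fin (n + 3)) → Prop}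
    (hP : ∀ {l : ℕ} {f : Fin l → Fin (n + 3)}, P f → IsLazySweep (cycleGraph (n + 3)) f)
    (hrot : ∀ t, P (cycleRotation (n + 3) t)) :
    pairSpanLength (cycleGraph (n + 3)) P = n + 4 := by
  refine pairSpanLength_eq (fun hf => ?_) (fun hf => ?_) (hrot _) (hrot _) mDist_cycleRotation
  · obtain ⟨i, -⟩ := (hP hf).1.1 0
    exact (mDist_le_dist _ _ i).trans (cycleGraph_dist_le_half _ _)
  · have := (hP hf).2.card_edgeFinset_le
    rw [card_edgeFinset_cycleGraph] at this
    omega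

end Cycle

theorem stmt15 (n : ℕ) (hn : 3 ≤ n) :
    strongEdgeL (SimpleGraph.cycleGraph n) = n + 1 ∧
      directEdgeL (SimpleGraph.cycleGraph n) = n + 1 := by
  obtain ⟨m, rfl⟩ := Nat.exists_eq_add_of_le' hn
  rw [strongEdgeL_eq_pairSpanLength, directEdgeL_eq_pairSpanLength]
  exact ⟨cycleGraph_pairSpanLength id fun t => (isSweep_cycleRotation t).isLazySweep,
    cycleGraph_pairSpanLength IsSweep.isLazySweep isSweep_cycleRotation⟩
end

section
/- For the complete graph K_n with n ≥ 2 vertices, L⊠_V(K_n)=L×_V(K_n)=n and L□_V(K_n)=2n−1. -/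
open SimpleGraph

lemma mod_spec (n a : ℕ) (h : a < 2*n) :
    (a < n ∧ a % n = a) ∨ (n ≤ a ∧ a % n = a - n) := by
  rcases lt_or_ge a n with h1 | h1
  · exact Or.inl ⟨h1, Nat.mod_eq_of_lt h1⟩
  · refine Or.inr ⟨h1, ?_⟩
    rw [Nat.mod_eq_sub_mod h1, Nat.mod_eq_of_lt (by omega)]

lemma image_card_le {α : Type*} [DecidableEq α] (F : ℕ → α) (l : ℕ) :
    ((Finset.range l).image F).card ≤
      1 + ((Finset.range (l-1)).filter (fun i => F i ≠ F (i+1))).card := by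
  induction l with
  | zero => simp
  | succ m ih =>
    match m, ih with
    | 0, _ => simp
    | k+1, ih =>
      have hrange : Finset.range (k+2) = insert (k+1) (Finset.range (k+1)) := Finset.range_add_one
      have hfilt : (Finset.range (k+1)).filter (fun i => F i ≠ F (i+1))
          = if F k ≠ F (k+1) then insert k ((Finset.range k).filter (fun i => F i ≠ F (i+1)))
            else (Finset.range k).filter (fun i => F i ≠ F (i+1)) := by
        rw [Finset.range_add_one, Finset.filter_insert]
      simp only [Nat.add_sub_cancel] at *
      by_cases h : F k = F (k+1)
      · rw [hrange, Finset.image_insert]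
        have hmem : F (k+1) ∈ (Finset.range (k+1)).image F := by
          apply Finset.mem_image.mpr ⟨k, by simp, h⟩
        rw [Finset.insert_eq_self.mpr hmem, hfilt, if_neg (by simpa using h)]
        simpa using ih
      · rw [hrange, Finset.image_insert, hfilt, if_pos h]
        have hk : k ∉ (Finset.range k).filter (fun i => F i ≠ F (i+1)) := by simp
        rw [Finset.card_insert_of_notMem hk]
        have := Finset.card_insert_le (F (k+1)) ((Finset.range (k+1)).image F)
        omega

lemma changes_lower {n l : ℕ} (F : ℕ → Fin n) (hF : ∀ v : Fin n, ∃ j < l, F j = v) :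
    n ≤ 1 + ((Finset.range (l-1)).filter (fun i => F i ≠ F (i+1))).card := by
  have himg : (Finset.range l).image F = Finset.univ := by
    apply Finset.eq_univ_iff_forall.mpr
    intro v
    obtain ⟨j, hj, hjv⟩ := hF v
    exact Finset.mem_image.mpr ⟨j, Finset.mem_range.mpr hj, hjv⟩
  have := image_card_le F l
  rw [himg, Finset.card_univ, Fintype.card_fin] at this
  exact this
open SimpleGraph

section Aux
variable {n l : ℕ}

lemma top_dist_eq_one {u v : Fin n} (h : u ≠ v) : (⊤ : SimpleGraph (Fin n)).dist u v = 1 :=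
  dist_eq_one_iff_adj.mpr ((top_adj u v).mpr h)

lemma top_dist_le_one (u v : Fin n) : (⊤ : SimpleGraph (Fin n)).dist u v ≤ 1 := by
  by_cases h : u = v
  · simp [h, SimpleGraph.dist_self]
  · rw [top_dist_eq_one h]

lemma surj_le {f : Fin l → Fin n} (hf : Function.Surjective f) : n ≤ l := by
  have := Fintype.card_le_of_surjective f hf
  simpa using this

lemma lazy_track_top_iff {f : Fin l → Fin n} :
    IsLazyTrack (⊤ : SimpleGraph (Fin n)) f ↔ Function.Surjective f := by
  constructor
  · exact fun h => h.1
  · intro h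
    refine ⟨h, fun i hi => ?_⟩
    by_cases he : f ⟨i, Nat.lt_of_succ_lt hi⟩ = f ⟨i + 1, hi⟩
    · exact Or.inr he
    · exact Or.inl ((top_adj _ _).mpr he)

lemma mDist_eq_one {f g : Fin l → Fin n} (hl : 0 < l)
    (h : ∀ i, f i ≠ g i) : mDist (⊤ : SimpleGraph (Fin n)) f g = 1 := by
  have hmem : (1 : ℕ) ∈ {d | ∃ i : Fin l, (⊤ : SimpleGraph (Fin n)).dist (f i) (g i) = d} :=
    ⟨⟨0, hl⟩, top_dist_eq_one (h _)⟩
  refine le_antisymm (Nat.sInf_le hmem) (le_csInf ⟨1, hmem⟩ ?_)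
  rintro b ⟨i, rfl⟩
  rw [top_dist_eq_one (h i)]

lemma mDist_eq_zero {f g : Fin l → Fin n} {i : Fin l}
    (h : f i = g i) : mDist (⊤ : SimpleGraph (Fin n)) f g = 0 :=
  Nat.sInf_eq_zero.mpr (Or.inl ⟨i, by rw [h, SimpleGraph.dist_self]⟩)

lemma mDist_le_one {f g : Fin l → Fin n} (hl : 0 < l) :
    mDist (⊤ : SimpleGraph (Fin n)) f g ≤ 1 :=
  le_trans (Nat.sInf_le ⟨⟨0, hl⟩, rfl⟩) (top_dist_le_one _ _)

/-- wrap-around helper -/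
lemma fwrap {α : Type*} (f : Fin l → α) (hl : 0 < l) (i : ℕ) (hi : i < l) :
    f ⟨i % l, Nat.mod_lt _ hl⟩ = f ⟨i, hi⟩ := by
  congr 1
  exact Fin.ext (Nat.mod_eq_of_lt hi)

lemma opp_len (hn : 2 ≤ n) {f g : Fin l → Fin n}
    (hf : Function.Surjective f) (hg : Function.Surjective g)
    (hop : IsOpposite (⊤ : SimpleGraph (Fin n)) f g) : 2 * n - 1 ≤ l := by
  have hnl : n ≤ l := surj_le hf
  have hl : 0 < l := by omega
  set F : ℕ → Fin n := fun i => f ⟨i % l, Nat.mod_lt _ hl⟩ with hF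
  set G : ℕ → Fin n := fun i => g ⟨i % l, Nat.mod_lt _ hl⟩ with hG
  have hFs : ∀ v : Fin n, ∃ j < l, F j = v := by
    intro v; obtain ⟨j, rfl⟩ := hf v
    exact ⟨j.val, j.isLt, congrArg f (Fin.ext (by simp [Nat.mod_eq_of_lt j.isLt]))⟩
  have hGs : ∀ v : Fin n, ∃ j < l, G j = v := by
    intro v; obtain ⟨j, rfl⟩ := hg v
    exact ⟨j.val, j.isLt, congrArg g (Fin.ext (by simp [Nat.mod_eq_of_lt j.isLt]))⟩
  have h1 := changes_lower F hFs
  have h2 := changes_lower G hGs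
  have hcompl : (Finset.range (l-1)).filter (fun i => G i ≠ G (i+1))
      = (Finset.range (l-1)).filter (fun i => ¬ (F i ≠ F (i+1))) := by
    apply Finset.filter_congr
    intro i hi
    have hi1 : i + 1 < l := by have := Finset.mem_range.mp hi; omega
    have hi0 : i < l := by omega
    have hstep := hop i hi1
    rw [top_adj] at hstep
    have eF0 : F i = f ⟨i, Nat.lt_of_succ_lt hi1⟩ := fwrap f hl i hi0
    have eF1 : F (i+1) = f ⟨i+1, hi1⟩ := fwrap f hl (i+1) hi1
    have eG0 : G i = g ⟨i, Nat.lt_of_succ_lt hi1⟩ := fwrap g hl i hi0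
    have eG1 : G (i+1) = g ⟨i+1, hi1⟩ := fwrap g hl (i+1) hi1
    rw [eF0, eF1, eG0, eG1]
    simp only [not_not, eq_iff_iff]
    tauto
  have hsum := Finset.card_filter_add_card_filter_not
    (s := Finset.range (l-1)) (p := fun i => F i ≠ F (i+1))
  rw [Finset.card_range] at hsum
  rw [hcompl] at h2
  omega

end Aux

section Cons
variable {n : ℕ}

def gd : Fin n → Fin n := fun i => ⟨(i.val + 1) % n, Nat.mod_lt _ i.pos⟩

lemma gd_surj (hn : 2 ≤ n) : Function.Surjective (gd (n := n)) := by
  intro v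
  have hv := v.isLt
  refine ⟨⟨(v.val + n - 1) % n, Nat.mod_lt _ (by omega)⟩, Fin.ext ?_⟩
  simp only [gd]
  rcases mod_spec n (v.val + n - 1) (by omega) with ⟨h1a, h1b⟩ | ⟨h1a, h1b⟩
  · rw [h1b]
    rcases mod_spec n (v.val + n - 1 + 1) (by omega) with ⟨h2a, h2b⟩ | ⟨h2a, h2b⟩ <;> omega
  · rw [h1b]
    rcases mod_spec n (v.val + n - 1 - n + 1) (by omega) with ⟨h2a, h2b⟩ | ⟨h2a, h2b⟩ <;> omega

lemma track_id (hn : 2 ≤ n) : IsTrack (⊤ : SimpleGraph (Fin n)) (id : Fin n → Fin n) := by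
  refine ⟨Function.surjective_id, fun i hi => (top_adj _ _).mpr ?_⟩
  simp only [id]
  intro h
  have := Fin.mk.injEq .. ▸ h
  omega

lemma track_gd (hn : 2 ≤ n) : IsTrack (⊤ : SimpleGraph (Fin n)) (gd (n := n)) := by
  refine ⟨gd_surj hn, fun i hi => (top_adj _ _).mpr ?_⟩
  simp only [gd, Fin.mk.injEq, ne_eq]
  rcases mod_spec n (i + 1) (by omega) with ⟨h1a, h1b⟩ | ⟨h1a, h1b⟩ <;>
    rcases mod_spec n (i + 1 + 1) (by omega) with ⟨h2a, h2b⟩ | ⟨h2a, h2b⟩ <;> omega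

lemma ne_id_gd (hn : 2 ≤ n) (i : Fin n) : (id i : Fin n) ≠ gd i := by
  simp only [gd, id]
  intro h
  have hh : i.val = (i.val + 1) % n := congrArg Fin.val h
  have hv := i.isLt
  rcases mod_spec n (i.val + 1) (by omega) with ⟨h1a, h1b⟩ | ⟨h1a, h1b⟩ <;> omega

def fc : Fin (2 * n - 1) → Fin n :=
  fun i => ⟨(i.val + 1) / 2, by have := i.isLt; omega⟩

def gc : Fin (2 * n - 1) → Fin n :=
  fun i => ⟨(i.val / 2 + 2) % n, Nat.mod_lt _ (by have := i.isLt; omega)⟩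

lemma fc_surj (hn : 2 ≤ n) : Function.Surjective (fc (n := n)) := by
  intro v
  refine ⟨⟨2 * v.val, by have := v.isLt; omega⟩, Fin.ext ?_⟩
  simp only [fc]
  omega

lemma gc_surj (hn : 2 ≤ n) : Function.Surjective (gc (n := n)) := by
  intro v
  have hv := v.isLt
  have hm := Nat.mod_lt (v.val + n - 2) (show 0 < n by omega)
  refine ⟨⟨2 * ((v.val + n - 2) % n), by omega⟩, Fin.ext ?_⟩
  simp only [gc]
  have he : 2 * ((v.val + n - 2) % n) / 2 = (v.val + n - 2) % n := by omega
  rw [he]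
  rcases mod_spec n (v.val + n - 2) (by omega) with ⟨h1a, h1b⟩ | ⟨h1a, h1b⟩ <;>
    rcases mod_spec n ((v.val + n - 2) % n + 2) (by omega) with ⟨h2a, h2b⟩ | ⟨h2a, h2b⟩ <;> omega

lemma opp_fc_gc (hn : 3 ≤ n) :
    IsOpposite (⊤ : SimpleGraph (Fin n)) (fc (n := n)) (gc (n := n)) := by
  intro i hi
  rw [top_adj]
  simp only [fc, gc, ne_eq, Fin.mk.injEq]
  rcases mod_spec n (i / 2 + 2) (by omega) with ⟨h1a, h1b⟩ | ⟨h1a, h1b⟩ <;>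
    rcases mod_spec n ((i + 1) / 2 + 2) (by omega) with ⟨h2a, h2b⟩ | ⟨h2a, h2b⟩ <;> omega

lemma ne_fc_gc (hn : 3 ≤ n) (i : Fin (2 * n - 1)) : fc i ≠ gc i := by
  have hv := i.isLt
  simp only [fc, gc, ne_eq, Fin.mk.injEq]
  rcases mod_spec n (i.val / 2 + 2) (by omega) with ⟨h1a, h1b⟩ | ⟨h1a, h1b⟩ <;> omega

end Cons

section Spans
variable {n : ℕ}

lemma strong_span (hn : 2 ≤ n) : strongVertexSpan (⊤ : SimpleGraph (Fin n)) = 1 := by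
  unfold strongVertexSpan
  have hmem : (1:ℕ) ∈ {d | ∃ (l : ℕ) (f g : Fin l → Fin n),
      IsLazyTrack (⊤ : SimpleGraph (Fin n)) f ∧ IsLazyTrack (⊤ : SimpleGraph (Fin n)) g ∧
      mDist (⊤ : SimpleGraph (Fin n)) f g = 1} :=
    ⟨n, id, gd, lazy_track_top_iff.mpr Function.surjective_id,
      lazy_track_top_iff.mpr (gd_surj hn), mDist_eq_one (by omega) (ne_id_gd hn)⟩
  have hub : ∀ d ∈ {d | ∃ (l : ℕ) (f g : Fin l → Fin n),
      IsLazyTrack (⊤ : SimpleGraph (Fin n)) f ∧ IsLazyTrack (⊤ : SimpleGraph (Fin n)) g ∧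
      mDist (⊤ : SimpleGraph (Fin n)) f g = d}, d ≤ 1 := by
    rintro d ⟨l, f, g, hf, hg, rfl⟩
    exact mDist_le_one (lt_of_lt_of_le (by omega : 0 < n) (surj_le hf.1))
  exact le_antisymm (csSup_le ⟨1, hmem⟩ hub) (le_csSup ⟨1, fun d hd => hub d hd⟩ hmem)

lemma direct_span (hn : 2 ≤ n) : directVertexSpan (⊤ : SimpleGraph (Fin n)) = 1 := by
  unfold directVertexSpan
  have hmem : (1:ℕ) ∈ {d | ∃ (l : ℕ) (f g : Fin l → Fin n),
      IsTrack (⊤ : SimpleGraph (Fin n)) f ∧ IsTrack (⊤ : SimpleGraph (Fin n)) g ∧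
      mDist (⊤ : SimpleGraph (Fin n)) f g = 1} :=
    ⟨n, id, gd, track_id hn, track_gd hn, mDist_eq_one (by omega) (ne_id_gd hn)⟩
  have hub : ∀ d ∈ {d | ∃ (l : ℕ) (f g : Fin l → Fin n),
      IsTrack (⊤ : SimpleGraph (Fin n)) f ∧ IsTrack (⊤ : SimpleGraph (Fin n)) g ∧
      mDist (⊤ : SimpleGraph (Fin n)) f g = d}, d ≤ 1 := by
    rintro d ⟨l, f, g, hf, hg, rfl⟩
    exact mDist_le_one (lt_of_lt_of_le (by omega : 0 < n) (surj_le hf.1))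
  exact le_antisymm (csSup_le ⟨1, hmem⟩ hub) (le_csSup ⟨1, fun d hd => hub d hd⟩ hmem)

lemma cart_span (hn : 3 ≤ n) : cartesianVertexSpan (⊤ : SimpleGraph (Fin n)) = 1 := by
  unfold cartesianVertexSpan
  have hmem : (1:ℕ) ∈ {d | ∃ (l : ℕ) (f g : Fin l → Fin n),
      IsLazyTrack (⊤ : SimpleGraph (Fin n)) f ∧ IsLazyTrack (⊤ : SimpleGraph (Fin n)) g ∧
      IsOpposite (⊤ : SimpleGraph (Fin n)) f g ∧ mDist (⊤ : SimpleGraph (Fin n)) f g = 1} :=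
    ⟨2*n-1, fc, gc, lazy_track_top_iff.mpr (fc_surj (by omega)),
      lazy_track_top_iff.mpr (gc_surj (by omega)), opp_fc_gc hn,
      mDist_eq_one (by omega) (ne_fc_gc hn)⟩
  have hub : ∀ d ∈ {d | ∃ (l : ℕ) (f g : Fin l → Fin n),
      IsLazyTrack (⊤ : SimpleGraph (Fin n)) f ∧ IsLazyTrack (⊤ : SimpleGraph (Fin n)) g ∧
      IsOpposite (⊤ : SimpleGraph (Fin n)) f g ∧ mDist (⊤ : SimpleGraph (Fin n)) f g = d}, d ≤ 1 := by
    rintro d ⟨l, f, g, hf, hg, hop, rfl⟩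
    exact mDist_le_one (lt_of_lt_of_le (by omega : 0 < n) (surj_le hf.1))
  exact le_antisymm (csSup_le ⟨1, hmem⟩ hub) (le_csSup ⟨1, fun d hd => hub d hd⟩ hmem)

def f3 : Fin 3 → Fin 2 := ![0, 0, 1]
def g3 : Fin 3 → Fin 2 := ![0, 1, 1]

lemma f3_surj : Function.Surjective f3 := by decide
lemma g3_surj : Function.Surjective g3 := by decide

lemma opp_f3_g3 : IsOpposite (⊤ : SimpleGraph (Fin 2)) f3 g3 := by
  intro i hi
  have h2 : i < 2 := by omega
  interval_cases i <;> simp [top_adj, f3, g3] <;> decide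

lemma f3_g3_meet : f3 ⟨0, by omega⟩ = g3 ⟨0, by omega⟩ := by decide

lemma cart_meet_two {l : ℕ} {f g : Fin l → Fin 2}
    (hf : Function.Surjective f) (hop : IsOpposite (⊤ : SimpleGraph (Fin 2)) f g) :
    ∃ i, f i = g i := by
  by_contra hne
  push_neg at hne
  have hl : 2 ≤ l := surj_le hf
  have h0 := hop 0 (by omega)
  rw [top_adj] at h0
  simp only [Nat.zero_add] at h0
  have hne0 := hne ⟨0, by omega⟩
  have hne1 := hne ⟨1, by omega⟩
  have a0 := (f ⟨0, by omega⟩).isLt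
  have a1 := (f ⟨1, by omega⟩).isLt
  have b0 := (g ⟨0, by omega⟩).isLt
  have b1 := (g ⟨1, by omega⟩).isLt
  simp only [ne_eq, Fin.ext_iff] at h0 hne0 hne1
  omega

lemma cart_span_two : cartesianVertexSpan (⊤ : SimpleGraph (Fin 2)) = 0 := by
  unfold cartesianVertexSpan
  refine Nat.le_zero.mp (csSup_le ⟨0, ?_⟩ ?_)
  · exact ⟨3, f3, g3, lazy_track_top_iff.mpr f3_surj, lazy_track_top_iff.mpr g3_surj,
      opp_f3_g3, mDist_eq_zero f3_g3_meet⟩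
  · rintro d ⟨l, f, g, hf, hg, hop, rfl⟩
    obtain ⟨i, hi⟩ := cart_meet_two hf.1 hop
    rw [mDist_eq_zero hi]

end Spans

section LVals
variable {n : ℕ}

lemma strongL (hn : 2 ≤ n) : strongVertexL (⊤ : SimpleGraph (Fin n)) = n := by
  unfold strongVertexL
  have hmem : n ∈ {l | ∃ f g : Fin l → Fin n,
      IsLazyTrack (⊤ : SimpleGraph (Fin n)) f ∧ IsLazyTrack (⊤ : SimpleGraph (Fin n)) g ∧
      mDist (⊤ : SimpleGraph (Fin n)) f g = strongVertexSpan (⊤ : SimpleGraph (Fin n))} :=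
    ⟨id, gd, lazy_track_top_iff.mpr Function.surjective_id,
      lazy_track_top_iff.mpr (gd_surj hn),
      by rw [strong_span hn]; exact mDist_eq_one (by omega) (ne_id_gd hn)⟩
  refine le_antisymm (Nat.sInf_le hmem) (le_csInf ⟨n, hmem⟩ ?_)
  rintro l ⟨f, g, hf, hg, -⟩
  exact surj_le hf.1

lemma directL (hn : 2 ≤ n) : directVertexL (⊤ : SimpleGraph (Fin n)) = n := by
  unfold directVertexL
  have hmem : n ∈ {l | ∃ f g : Fin l → Fin n,
      IsTrack (⊤ : SimpleGraph (Fin n)) f ∧ IsTrack (⊤ : SimpleGraph (Fin n)) g ∧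
      mDist (⊤ : SimpleGraph (Fin n)) f g = directVertexSpan (⊤ : SimpleGraph (Fin n))} :=
    ⟨id, gd, track_id hn, track_gd hn,
      by rw [direct_span hn]; exact mDist_eq_one (by omega) (ne_id_gd hn)⟩
  refine le_antisymm (Nat.sInf_le hmem) (le_csInf ⟨n, hmem⟩ ?_)
  rintro l ⟨f, g, hf, hg, -⟩
  exact surj_le hf.1

lemma cartL (hn : 2 ≤ n) : cartesianVertexL (⊤ : SimpleGraph (Fin n)) = 2 * n - 1 := by
  unfold cartesianVertexL
  have hmem : 2 * n - 1 ∈ {l | ∃ f g : Fin l → Fin n,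
      IsLazyTrack (⊤ : SimpleGraph (Fin n)) f ∧ IsLazyTrack (⊤ : SimpleGraph (Fin n)) g ∧
      IsOpposite (⊤ : SimpleGraph (Fin n)) f g ∧
      mDist (⊤ : SimpleGraph (Fin n)) f g = cartesianVertexSpan (⊤ : SimpleGraph (Fin n))} := by
    rcases eq_or_lt_of_le hn with h2 | h3
    · subst h2
      exact ⟨f3, g3, lazy_track_top_iff.mpr f3_surj, lazy_track_top_iff.mpr g3_surj,
        opp_f3_g3, by rw [cart_span_two]; exact mDist_eq_zero f3_g3_meet⟩
    · have h3' : 3 ≤ n := h3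
      exact ⟨fc, gc, lazy_track_top_iff.mpr (fc_surj hn), lazy_track_top_iff.mpr (gc_surj hn),
        opp_fc_gc h3', by rw [cart_span h3']; exact mDist_eq_one (by omega) (ne_fc_gc h3')⟩
  refine le_antisymm (Nat.sInf_le hmem) (le_csInf ⟨_, hmem⟩ ?_)
  rintro l ⟨f, g, hf, hg, hop, -⟩
  exact opp_len hn hf.1 hg.1 hop

end LVals


theorem stmt18 (n : ℕ) (hn : 2 ≤ n) :
    strongVertexL (⊤ : SimpleGraph (Fin n)) = n ∧
      directVertexL (⊤ : SimpleGraph (Fin n)) = n ∧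
        cartesianVertexL (⊤ : SimpleGraph (Fin n)) = 2 * n - 1 :=
  ⟨strongL hn, directL hn, cartL hn⟩
end
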